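/- arXiv:2509.21473 — 2 statements merged into one kernel-verified Lean document; each statement's English description precedes it below -/
import Mathlib

section
/- For every δ ∈ (0,1], every ε > 0, every integer d ≥ 1, every even integer N ≥ 2, and all positive weights p_1,…,p_N with Σ_{i=1}^N p_i = 1, there exist vectors μ_1,…,μ_N ∈ ℝ^d such that Σ_{i=1}^N p_i μ_i = 0 and, for every v ∈ ℝ^d with ‖v‖₂ ≤ ε and every i ∈ {1,…,N}, the standard-covariance Gaussian density satisfies (2π)^{-d/2} exp(-(1/2)‖v - μ_i‖₂²) ≤ δ. (Hence any estimate within distance ε of the loss-minimizing estimate 0 δ-hallucinates.) -/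
/-- Existence of δ-hallucination for semi-optimal estimators: there is an
identity-covariance Gaussian mixture with mixture mean `0` such that every point within
distance `ε` of `0` has density at most `δ` under every latent state. -/
theorem stmt_4 (δ : ℝ) (hδ : δ ∈ Set.Ioc (0 : ℝ) 1) (ε : ℝ) (hε : 0 < ε)
    (d N : ℕ) (hd : 1 ≤ d) (hN : 2 ≤ N) (hNeven : Even N)
    (p : Fin N → ℝ) (hp : ∀ i, 0 < p i) (hsum : ∑ i, p i = 1) :
    ∃ μ : Fin N → EuclideanSpace ℝ (Fin d),
      (∑ i, p i • μ i = 0) ∧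
      ∀ v : EuclideanSpace ℝ (Fin d), ‖v‖ ≤ ε → ∀ i : Fin N,
        (2 * Real.pi) ^ (-(d : ℝ) / 2) * Real.exp (-(1 / 2) * ‖v - μ i‖ ^ 2) ≤ δ := by
  obtain ⟨hδ0, hδ1⟩ := hδ
  set i0 : Fin N := ⟨0, by omega⟩ with hi0
  have hp0 : 0 < p i0 := hp i0
  -- p i0 < 1
  have hrest : ∑ i ∈ Finset.univ.erase i0, p i = 1 - p i0 := by
    have h := Finset.add_sum_erase Finset.univ p (Finset.mem_univ i0)
    rw [hsum] at h
    linarith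
  have hrestpos : 0 < 1 - p i0 := by
    rw [← hrest]
    apply Finset.sum_pos
    · intro i _; exact hp i
    · refine ⟨⟨1, by omega⟩, ?_⟩
      simp [Finset.mem_erase, hi0, Fin.ext_iff]
  set a : Fin N → ℝ := fun i => if i = i0 then -(1 - p i0) / p i0 else 1 with ha
  have hsuma : ∑ i, p i * a i = 0 := by
    have h1 : ∑ i, p i * a i
        = p i0 * a i0 + ∑ i ∈ Finset.univ.erase i0, p i * a i :=
      (Finset.add_sum_erase Finset.univ (fun i => p i * a i) (Finset.mem_univ i0)).symm
    have h2 : ∑ i ∈ Finset.univ.erase i0, p i * a i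
        = ∑ i ∈ Finset.univ.erase i0, p i := by
      apply Finset.sum_congr rfl
      intro i hi
      have : i ≠ i0 := (Finset.mem_erase.mp hi).1
      simp [ha, this]
    have h3 : p i0 * a i0 = -(1 - p i0) := by
      simp only [ha, if_pos rfl]
      field_simp
    rw [h1, h2, h3, hrest]; ring
  -- lower bound on |a i|
  set c : ℝ := min ((1 - p i0) / p i0) 1 with hc
  have hcpos : 0 < c := lt_min (div_pos hrestpos hp0) one_pos
  have hac : ∀ i, c ≤ |a i| := by
    intro i
    by_cases h : i = i0
    · simp only [ha, h, if_pos rfl]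
      rw [abs_of_nonpos (div_nonpos_of_nonpos_of_nonneg (by linarith) hp0.le)]
      calc c ≤ (1 - p i0) / p i0 := min_le_left _ _
        _ = -(-(1 - p i0) / p i0) := by ring
    · simp only [ha, if_neg h, abs_one]
      exact min_le_right _ _
  set L : ℝ := Real.sqrt (-2 * Real.log δ) with hL
  have hL0 : 0 ≤ L := Real.sqrt_nonneg _
  have hlog : Real.log δ ≤ 0 := Real.log_nonpos hδ0.le hδ1
  have hL2 : L ^ 2 = -2 * Real.log δ := Real.sq_sqrt (by linarith)
  set t : ℝ := (ε + L) / c with ht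
  have ht0 : 0 ≤ t := by positivity
  -- the direction vector
  set e : EuclideanSpace ℝ (Fin d) := EuclideanSpace.single (⟨0, hd⟩ : Fin d) 1 with he
  have hne : ‖e‖ = 1 := by simp [he, EuclideanSpace.norm_single]
  refine ⟨fun i => (t * a i) • e, ?_, ?_⟩
  · have : ∑ i, p i • (t * a i) • e = (∑ i, p i * (t * a i)) • e := by
      rw [Finset.sum_smul]
      apply Finset.sum_congr rfl
      intro i _
      rw [smul_smul]
    rw [this]
    have : ∑ i, p i * (t * a i) = t * ∑ i, p i * a i := by
      rw [Finset.mul_sum]; apply Finset.sum_congr rfl; intro i _; ring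
    rw [this, hsuma, mul_zero, zero_smul]
  · intro v hv i
    have hnorm : ‖(t * a i) • e‖ = t * |a i| := by
      rw [norm_smul, hne, mul_one, Real.norm_eq_abs, abs_mul, abs_of_nonneg ht0]
    have hta : ε + L ≤ t * |a i| := by
      have h1 : t * c ≤ t * |a i| := mul_le_mul_of_nonneg_left (hac i) ht0
      have h2 : t * c = ε + L := by
        rw [ht]; field_simp
      linarith
    have hL_le : L ≤ ‖v - (t * a i) • e‖ := by
      have := norm_sub_norm_le ((t * a i) • e) v
      rw [hnorm] at this
      rw [norm_sub_rev]
      linarith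
    have hsq : L ^ 2 ≤ ‖v - (t * a i) • e‖ ^ 2 := by
      apply pow_le_pow_left₀ hL0 hL_le
    have hexp : Real.exp (-(1 / 2) * ‖v - (t * a i) • e‖ ^ 2) ≤ δ := by
      rw [← Real.exp_log hδ0]
      apply Real.exp_le_exp.mpr
      rw [hL2] at hsq
      linarith
    have hpow : (2 * Real.pi) ^ (-(d : ℝ) / 2) ≤ 1 := by
      apply Real.rpow_le_one_of_one_le_of_nonpos
      · linarith [Real.pi_gt_three]
      · have : (0:ℝ) ≤ (d:ℝ) := Nat.cast_nonneg d
        linarith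
    calc (2 * Real.pi) ^ (-(d : ℝ) / 2) * Real.exp (-(1 / 2) * ‖v - (t * a i) • e‖ ^ 2)
        ≤ 1 * δ := by
          apply mul_le_mul hpow hexp (Real.exp_nonneg _)
          norm_num
      _ = δ := one_mul δ
end

section
/- Let E be a real normed vector space, let d ≥ 1 be an integer, and let A* : E → ℝ^d be L-Lipschitz (L > 0). Let x ∈ E, let N ≥ 2 be an even integer, let p_1,…,p_N be positive weights with Σ_{i=1}^N p_i = 1, and let δ_1,…,δ_N ∈ E be hint vectors with ‖δ_i‖ ≤ B_δ for all i. Then for every δ ∈ (0,1] there exist vectors μ_1,…,μ_N ∈ ℝ^d with Σ_{i=1}^N p_i μ_i = A*(x) such that for all i, j ∈ {1,…,N}, the standard-covariance Gaussian density satisfies (2π)^{-d/2} exp(-(1/2)‖A*(x + δ_i) - μ_j‖₂²) ≤ δ. (That is, the estimator δ-hallucinates at every tilted input x + δ_i with respect to the mixture Σ_j p_j N(μ_j, I) whose mean equals A*(x).) -/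
/-- Existence of δ-hallucination at tilted inputs: for an `L`-Lipschitz estimator `A`
and bounded hints, there is an identity-covariance Gaussian mixture with mixture mean
`A x` such that every tilted estimate `A (x + δᵢ)` has density at most `δ` under every
latent state. -/
theorem stmt_8 {E : Type*} [NormedAddCommGroup E] [NormedSpace ℝ E]
    (d : ℕ) (hd : 1 ≤ d) (L : ℝ) (hL : 0 < L)
    (A : E → EuclideanSpace ℝ (Fin d))
    (hA : ∀ u v : E, ‖A u - A v‖ ≤ L * ‖u - v‖)
    (x : E) (N : ℕ) (hN : 2 ≤ N) (hNeven : Even N)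
    (p : Fin N → ℝ) (hp : ∀ i, 0 < p i) (hsum : ∑ i, p i = 1)
    (Bδ : ℝ) (hint : Fin N → E) (hhint : ∀ i, ‖hint i‖ ≤ Bδ)
    (δ : ℝ) (hδ : δ ∈ Set.Ioc (0 : ℝ) 1) :
    ∃ μ : Fin N → EuclideanSpace ℝ (Fin d),
      (∑ i, p i • μ i = A x) ∧
      ∀ i j : Fin N,
        (2 * Real.pi) ^ (-(d : ℝ) / 2) *
          Real.exp (-(1 / 2) * ‖A (x + hint i) - μ j‖ ^ 2) ≤ δ := by
  obtain ⟨hδ0, hδ1⟩ := hδ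
  obtain ⟨m, hm⟩ := hNeven
  have hBδ : 0 ≤ Bδ := le_trans (norm_nonneg _) (hhint ⟨0, by omega⟩)
  have hlog : Real.log δ ≤ 0 := Real.log_nonpos hδ0.le hδ1
  set M : ℝ := Real.sqrt (-2 * Real.log δ) with hM
  have hM0 : 0 ≤ M := Real.sqrt_nonneg _
  have hMsq : M ^ 2 = -2 * Real.log δ := Real.sq_sqrt (by linarith)
  set t : ℝ := L * Bδ + M with ht
  have ht0 : 0 ≤ t := by positivity
  set e : EuclideanSpace ℝ (Fin d) := EuclideanSpace.single ⟨0, by omega⟩ (1 : ℝ) with he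
  have hnorme : ‖e‖ = 1 := by
    rw [he, EuclideanSpace.norm_single]; simp
  set s : Fin N → ℝ := fun j => if (j : ℕ) < m then 1 else -1 with hs
  set c : Fin N → ℝ := fun j => s j * t / p j with hc
  have hp1 : ∀ j, p j ≤ 1 := by
    intro j
    rw [← hsum]
    exact Finset.single_le_sum (fun i _ => (hp i).le) (Finset.mem_univ j)
  refine ⟨fun j => A x + c j • e, ?_, ?_⟩
  · have hsum_s : ∑ j : Fin N, s j = 0 := by
      rw [hs]
      rw [Fin.sum_univ_eq_sum_range (fun k => if k < m then (1:ℝ) else -1) N]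
      have hsplit : Finset.range N = Finset.Ico 0 m ∪ Finset.Ico m N := by
        rw [Finset.range_eq_Ico, Finset.Ico_union_Ico_eq_Ico (by omega) (by omega)]
      rw [hsplit, Finset.sum_union (by
        simp [Finset.disjoint_left]; omega)]
      have e1 : ∀ k ∈ Finset.Ico 0 m, (if k < m then (1:ℝ) else -1) = 1 := by
        intro k hk
        simp only [Finset.mem_Ico] at hk
        simp [hk.2]
      have e2 : ∀ k ∈ Finset.Ico m N, (if k < m then (1:ℝ) else -1) = -1 := by
        intro k hk
        simp only [Finset.mem_Ico] at hk
        simp [Nat.not_lt.mpr hk.1]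
      rw [Finset.sum_congr rfl e1, Finset.sum_congr rfl e2,
        Finset.sum_const, Finset.sum_const, Nat.card_Ico, Nat.card_Ico]
      have : N - m = m := by omega
      rw [this]
      simp
    have hkey : ∑ j : Fin N, p j • (A x + c j • e) =
        (∑ j : Fin N, p j) • A x + (∑ j : Fin N, (p j * c j)) • e := by
      rw [Finset.sum_smul, Finset.sum_smul, ← Finset.sum_add_distrib]
      congr 1
      ext j
      rw [smul_add, mul_smul]
    rw [hkey, hsum, one_smul]
    have hz : ∑ j : Fin N, p j * c j = 0 := by
      have hpc : ∀ j : Fin N, p j * c j = s j * t := by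
        intro j
        rw [hc]
        rw [mul_comm, div_mul_cancel₀ _ (hp j).ne']
      rw [Finset.sum_congr rfl (fun j _ => hpc j), ← Finset.sum_mul, hsum_s, zero_mul]
    rw [hz, zero_smul, add_zero]
  · intro i j
    have habs : |c j| = t / p j := by
      rw [hc, abs_div, abs_mul, abs_of_pos (hp j)]
      rw [hs]
      by_cases h : (j : ℕ) < m <;> simp [h, abs_of_nonneg ht0]
    have hAx : ‖A (x + hint i) - A x‖ ≤ L * Bδ := by
      calc ‖A (x + hint i) - A x‖ ≤ L * ‖(x + hint i) - x‖ := hA _ _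
        _ = L * ‖hint i‖ := by rw [add_sub_cancel_left]
        _ ≤ L * Bδ := by nlinarith [hhint i, norm_nonneg (hint i)]
    have hfar : M ≤ ‖A (x + hint i) - (A x + c j • e)‖ := by
      have h1 : ‖c j • e‖ = t / p j := by
        rw [norm_smul, hnorme, mul_one, Real.norm_eq_abs, habs]
      have h2 : t ≤ t / p j := by
        rw [le_div_iff₀ (hp j)]
        nlinarith [hp1 j, hp j]
      have h3 : ‖A (x + hint i) - (A x + c j • e)‖
          = ‖(A (x + hint i) - A x) - c j • e‖ := by
        congr 1
        abel
      have h4 : ‖c j • e‖ - ‖A (x + hint i) - A x‖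
          ≤ ‖(A (x + hint i) - A x) - c j • e‖ := by
        have := norm_sub_norm_le (c j • e) (A (x + hint i) - A x)
        have hrev : ‖c j • e - (A (x + hint i) - A x)‖
            = ‖(A (x + hint i) - A x) - c j • e‖ := norm_sub_rev _ _
        linarith
      rw [h3]
      calc M = t - L * Bδ := by rw [ht]; ring
        _ ≤ t / p j - ‖A (x + hint i) - A x‖ := by linarith
        _ = ‖c j • e‖ - ‖A (x + hint i) - A x‖ := by rw [h1]
        _ ≤ _ := h4
    have hexp : Real.exp (-(1 / 2) * ‖A (x + hint i) - (A x + c j • e)‖ ^ 2) ≤ δ := by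
      have hsq : M ^ 2 ≤ ‖A (x + hint i) - (A x + c j • e)‖ ^ 2 :=
        pow_le_pow_left₀ hM0 hfar 2
      have hle : -(1 / 2) * ‖A (x + hint i) - (A x + c j • e)‖ ^ 2 ≤ Real.log δ := by
        linarith [hsq, hMsq]
      calc Real.exp _ ≤ Real.exp (Real.log δ) := Real.exp_le_exp.mpr hle
        _ = δ := Real.exp_log hδ0
    have hpow : (2 * Real.pi) ^ (-(d : ℝ) / 2) ≤ 1 := by
      apply Real.rpow_le_one_of_one_le_of_nonpos
      · nlinarith [Real.pi_gt_three]
      · have : (0:ℝ) ≤ d := Nat.cast_nonneg d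
        linarith
    calc (2 * Real.pi) ^ (-(d : ℝ) / 2) *
          Real.exp (-(1 / 2) * ‖A (x + hint i) - (A x + c j • e)‖ ^ 2)
        ≤ 1 * δ := mul_le_mul hpow hexp (Real.exp_nonneg _) one_pos.le
      _ = δ := one_mul δ
end
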